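/- arXiv:1112.3546 — 2 statements merged into one kernel-verified Lean document; each statement's English description precedes it below -/
import Mathlib

section
/- Assume (AU) with bound N, and let Φ : ℤ → ℝ solve the γ-eigenproblem and satisfy (AΦ). Then the restriction of Φ to [−N−1, N+1] satisfies the restricted γ-system: Φ i = max (Φ (i+1) + γ i − k) (Φ (i−1) + γ i) for all −N ≤ i ≤ N, Φ (N+1) = Φ N + γ (N+1), and Φ (−N−1) = Φ (−N) + γ (−N−1) − k. The same holds with δ in place of γ throughout. -/
/-- `γ i = min (u i) (1 - u (i-1))`. -/
noncomputable def gam (u : ℤ → ℝ) (i : ℤ) : ℝ := min (u i) (1 - u (i - 1))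

/-- `δ i = min (u (i-1)) (1 - u i)`. -/
noncomputable def del (u : ℤ → ℝ) (i : ℤ) : ℝ := min (u (i - 1)) (1 - u i)

/-- `Φ` solves the γ-eigenproblem. -/
def SolvesG (u : ℤ → ℝ) (k : ℝ) (Φ : ℤ → ℝ) : Prop :=
  ∀ i : ℤ, max (Φ (i + 1) + gam u i - k) (Φ (i - 1) + gam u i) = Φ i

/-- `Φ` solves the δ-eigenproblem. -/
def SolvesD (u : ℤ → ℝ) (k : ℝ) (Φ : ℤ → ℝ) : Prop :=
  ∀ i : ℤ, max (Φ (i + 1) + del u i - k) (Φ (i - 1) + del u i) = Φ i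

/-- Condition (AΦ). -/
def APhi (k : ℝ) (Φ : ℤ → ℝ) : Prop :=
  ∀ M : ℤ, (∃ N' : ℤ, M ≤ N' ∧ Φ (N' + 1) = Φ N') ∧
    (∃ N'' : ℤ, M ≤ N'' ∧ Φ (-N'' - 1) = Φ (-N'') - k)

private lemma max_left_of {a b x : ℝ} (h : max a b = x) (hb : b < x) : a = x := by
  rcases le_or_gt a b with hab | hab
  · rw [max_eq_right hab] at h; exact absurd h hb.ne
  · rwa [max_eq_left hab.le] at h

private lemma max_right_of {a b x : ℝ} (h : max a b = x) (ha : a < x) : b = x := by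
  rcases le_or_gt a b with hab | hab
  · rwa [max_eq_right hab] at h
  · rw [max_eq_left hab.le] at h; exact absurd h ha.ne

private lemma key (k : ℝ) (N : ℤ) (c Φ : ℤ → ℝ) (hc0 : ∀ i, 0 ≤ c i)
    (hcz : ∀ i : ℤ, N + 1 ≤ i ∨ i ≤ -N - 1 → c i = 0)
    (hΦ : ∀ i, max (Φ (i + 1) + c i - k) (Φ (i - 1) + c i) = Φ i)
    (hA : APhi k Φ) :
    (∀ i : ℤ, -N ≤ i → i ≤ N →
        Φ i = max (Φ (i + 1) + c i - k) (Φ (i - 1) + c i)) ∧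
    Φ (N + 1) = Φ N + c (N + 1) ∧
    Φ (-N - 1) = Φ (-N) + c (-N - 1) - k := by
  refine ⟨fun i _ _ => (hΦ i).symm, ?_, ?_⟩
  · have hc1 : c (N + 1) = 0 := hcz _ (Or.inl le_rfl)
    rw [hc1, add_zero]
    have h1 := hΦ (N + 1)
    rw [hc1, show N + 1 - 1 = N from by ring, add_zero, add_zero] at h1
    have hge : Φ N ≤ Φ (N + 1) := h1 ▸ le_max_right _ _
    by_contra hne
    have hlt : Φ N < Φ (N + 1) := lt_of_le_of_ne hge fun h => hne h.symm
    -- k > 0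
    have h0 := hΦ N
    have hklt : Φ (N + 1) + c N - k ≤ Φ N := h0 ▸ le_max_left _ _
    have hk : 0 < k := by have := hc0 N; linarith
    -- induction: for all j ≥ N+1, Φ N < Φ j and Φ (j+1) = Φ j + k
    have ind : ∀ j : ℤ, N + 1 ≤ j → Φ N < Φ j ∧ Φ (j + 1) = Φ j + k := by
      refine Int.le_induction ⟨hlt, ?_⟩ ?_
      · have := max_left_of h1 (by linarith)
        linarith
      · rintro j hj ⟨hlt', heq⟩
        have hlt2 : Φ j < Φ (j + 1) := by linarith
        have h2 := hΦ (j + 1)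
        rw [hcz (j + 1) (Or.inl (by omega)), show j + 1 - 1 = j from by ring,
          add_zero, add_zero] at h2
        refine ⟨by linarith, ?_⟩
        have := max_left_of h2 hlt2
        linarith
    obtain ⟨⟨N', hN', heq'⟩, -⟩ := hA (N + 1)
    have := (ind N' hN').2
    rw [heq'] at this
    linarith
  · have hc1 : c (-N - 1) = 0 := hcz _ (Or.inr le_rfl)
    rw [hc1, add_zero]
    have h1 := hΦ (-N - 1)
    rw [hc1, show -N - 1 + 1 = -N from by ring, add_zero, add_zero] at h1
    have hge : Φ (-N) - k ≤ Φ (-N - 1) := h1 ▸ le_max_left _ _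
    by_contra hne
    have hlt : Φ (-N) - k < Φ (-N - 1) :=
      lt_of_le_of_ne hge fun h => hne (by linarith)
    -- Φ (-N-1) ≤ Φ (-N)
    have h0 := hΦ (-N)
    have hle' : Φ (-N - 1) + c (-N) ≤ Φ (-N) := h0 ▸ le_max_right _ _
    have hk : 0 < k := by have := hc0 (-N); linarith
    -- induction down: for all j ≤ -N-1, Φ j = Φ (-N-1) and Φ (j+1) - k < Φ j
    have ind : ∀ j : ℤ, j ≤ -N - 1 → Φ j = Φ (-N - 1) ∧ Φ (j + 1) - k < Φ j := by
      refine Int.le_induction_down ⟨rfl, by simpa using hlt⟩ ?_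
      rintro j hj ⟨heq, hlt'⟩
      have h2 := hΦ j
      rw [hcz j (Or.inr hj), add_zero, add_zero] at h2
      have heq2 : Φ (j - 1) = Φ j := max_right_of h2 (by linarith)
      refine ⟨heq2.trans heq, ?_⟩
      rw [show j - 1 + 1 = j from by ring, heq2]
      linarith
    obtain ⟨-, ⟨N'', hN'', heq''⟩⟩ := hA (N + 1)
    have e1 : Φ (-N'') = Φ (-N - 1) := (ind (-N'') (by omega)).1
    have e2 : Φ (-N'' - 1) = Φ (-N - 1) := (ind (-N'' - 1) (by omega)).1
    rw [e1, e2] at heq''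
    linarith

/-- Under (AU), the restriction to `[-N-1, N+1]` of a solution of the
γ-eigenproblem (resp. δ-eigenproblem) satisfying (AΦ) satisfies the restricted system. -/
theorem stmt_8 (u : ℤ → ℝ) (hu : ∀ i : ℤ, 0 ≤ u i ∧ u i ≤ 1) (k : ℝ)
    (N : ℕ) (hN : 0 < N) (hAU : ∀ i : ℤ, ((N : ℤ) ≤ i ∨ i ≤ -(N : ℤ)) → u i = 0) :
    (∀ Φ : ℤ → ℝ, SolvesG u k Φ → APhi k Φ →
      (∀ i : ℤ, -(N : ℤ) ≤ i → i ≤ (N : ℤ) →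
        Φ i = max (Φ (i + 1) + gam u i - k) (Φ (i - 1) + gam u i)) ∧
      Φ ((N : ℤ) + 1) = Φ (N : ℤ) + gam u ((N : ℤ) + 1) ∧
      Φ (-(N : ℤ) - 1) = Φ (-(N : ℤ)) + gam u (-(N : ℤ) - 1) - k) ∧
    (∀ Φ : ℤ → ℝ, SolvesD u k Φ → APhi k Φ →
      (∀ i : ℤ, -(N : ℤ) ≤ i → i ≤ (N : ℤ) →
        Φ i = max (Φ (i + 1) + del u i - k) (Φ (i - 1) + del u i)) ∧
      Φ ((N : ℤ) + 1) = Φ (N : ℤ) + del u ((N : ℤ) + 1) ∧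
      Φ (-(N : ℤ) - 1) = Φ (-(N : ℤ)) + del u (-(N : ℤ) - 1) - k) := by
  have h01 : ∀ i : ℤ, 0 ≤ u i ∧ 0 ≤ 1 - u i := fun i => ⟨(hu i).1, by linarith [(hu i).2]⟩
  constructor
  · intro Φ hS hA
    exact key k (N : ℤ) (gam u) Φ
      (fun i => le_min (h01 i).1 (h01 (i - 1)).2)
      (fun i hi => by
        rcases hi with hi | hi
        · rw [gam, hAU i (Or.inl (by omega)), min_eq_left (h01 (i - 1)).2]
        · rw [gam, hAU i (Or.inr (by omega)), min_eq_left (h01 (i - 1)).2])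
      hS hA
  · intro Φ hS hA
    exact key k (N : ℤ) (del u) Φ
      (fun i => le_min (h01 (i - 1)).1 (h01 i).2)
      (fun i hi => by
        rcases hi with hi | hi
        · rw [del, hAU (i - 1) (Or.inl (by omega)), min_eq_left (h01 i).2]
        · rw [del, hAU (i - 1) (Or.inr (by omega)), min_eq_left (h01 i).2])
      hS hA
end

section
/- Assume (AU) with bound N, and let S ∈ ℝ be the greatest value of u (i−1) + u i, i.e. u (i−1) + u i ≤ S for all i ∈ ℤ and S = u (i₀−1) + u i₀ for some i₀ (such S exists under (AU)). Then there exists Φ : ℤ → ℝ solving the γ-eigenproblem and satisfying (AΦ) if and only if k = min S 1; likewise, there exists Φ : ℤ → ℝ solving the δ-eigenproblem and satisfying (AΦ) if and only if k = min S 1. -/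
/-!
Write `g` for `γ` or `δ` and `c` for the largest value of `g i + g (i + 1)`; under (AU) `g`
vanishes far out and `c = min S 1`. Adding the two branch inequalities of the eigenproblem at `i`
and `i + 1` gives `g i + g (i + 1) ≤ k`, hence `c ≤ k`. If `c < k`, the first branch is never
active just below an index where the second one is; starting from the right-hand half of (AΦ),
the second branch is then active all the way down, and the left-hand half of (AΦ) forces
`k = 0 ≤ c`. Conversely, for `k = c` a solution is the primitive of the increments `c - g i` left
of a maximising index and `g (i + 1)` right of it.
-/

open Filter Set

theorem Int.exists_forall_apply_add_one_eq {G : Type*} [AddCommGroup G] (d : ℤ → G) :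
    ∃ Φ : ℤ → G, ∀ i, Φ (i + 1) = Φ i + d i := by
  refine ⟨fun z ↦ z.inductionOn' 0 (motive := fun _ ↦ G) 0 (fun j _ x ↦ x + d j)
    (fun j _ x ↦ x - d (j - 1)), fun i ↦ ?_⟩
  rcases le_or_gt 0 i with hi | hi
  · exact Int.inductionOn'_add_one hi
  · obtain ⟨j, rfl⟩ : ∃ j, i = j - 1 := ⟨i + 1, by ring⟩
    simp only [sub_add_cancel]
    rw [Int.inductionOn'_sub_one (by omega)]
    abel

/-- The eigenproblem with an arbitrary weight `g` in place of `γ` or `δ`. -/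
def SolvesEigen (g : ℤ → ℝ) (k : ℝ) (Φ : ℤ → ℝ) : Prop :=
  ∀ i : ℤ, max (Φ (i + 1) + g i - k) (Φ (i - 1) + g i) = Φ i

namespace SolvesEigen

variable {g : ℤ → ℝ} {k c : ℝ} {Φ : ℤ → ℝ}

theorem add_le (h : SolvesEigen g k Φ) (i : ℤ) : g i + g (i + 1) ≤ k := by
  have hleft : Φ (i + 1) + g i - k ≤ Φ i := h i ▸ le_max_left _ _
  have hright : Φ (i + 1 - 1) + g (i + 1) ≤ Φ (i + 1) := h (i + 1) ▸ le_max_right _ _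
  rw [add_sub_cancel_right] at hright
  linarith

theorem eq_sub_one_add_of_add_lt (h : SolvesEigen g k Φ) {i : ℤ} (hk : g i + g (i + 1) < k)
    (hsucc : Φ (i + 1) = Φ i + g (i + 1)) : Φ i = Φ (i - 1) + g i := by
  rcases max_choice (Φ (i + 1) + g i - k) (Φ (i - 1) + g i) with hmax | hmax <;>
    rw [h i] at hmax
  · linarith
  · exact hmax

theorem eq_sub_one_add_of_forall_add_lt (h : SolvesEigen g k Φ)
    (hk : ∀ i, g i + g (i + 1) < k) {m : ℤ} (hm : Φ m = Φ (m - 1) + g m) :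
    ∀ i ≤ m, Φ i = Φ (i - 1) + g i := by
  intro i hi
  induction i, hi using Int.leInductionDown with
  | base => exact hm
  | pred i _ ih =>
    apply h.eq_sub_one_add_of_add_lt (hk _)
    rwa [sub_add_cancel]

theorem le_of_aPhi (h : SolvesEigen g k Φ) (hΦ : APhi k Φ)
    (hc : IsGreatest (range fun i ↦ g i + g (i + 1)) c)
    (htop : ∀ᶠ i in atTop, g i = 0) (hbot : ∀ᶠ i in atBot, g i = 0) : k ≤ c := by
  obtain ⟨A, hA⟩ := eventually_atTop.1 htop
  obtain ⟨B, hB⟩ := eventually_atBot.1 hbot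
  have hc0 : 0 ≤ c := by
    simpa [hA A le_rfl, hA (A + 1) (by omega)] using hc.2 ⟨A, rfl⟩
  by_contra! hck
  obtain ⟨n, hn, hΦn⟩ := (hΦ (max A 0)).1
  obtain ⟨m, hm, hΦm⟩ := (hΦ (max (-B) 0)).2
  have hstep := h.eq_sub_one_add_of_forall_add_lt (fun i ↦ (hc.2 ⟨i, rfl⟩).trans_lt hck)
    (m := n + 1) (by rw [add_sub_cancel_right, hΦn, hA _ (by omega), add_zero])
  have hm' := hstep (-m) (by omega)
  rw [hB _ (by omega)] at hm'
  linarith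

theorem isGreatest_le (h : SolvesEigen g k Φ)
    (hc : IsGreatest (range fun i ↦ g i + g (i + 1)) c) : c ≤ k := by
  obtain ⟨p, rfl⟩ := hc.1
  exact h.add_le p

end SolvesEigen

/-- The solution climbs by `c - g i` up to the maximising index `p` and by `g (i + 1)` after it;
both rules agree at `p` because `g p + g (p + 1) = c`. -/
theorem exists_solvesEigen_aPhi {g : ℤ → ℝ} {c : ℝ}
    (hc : IsGreatest (range fun i ↦ g i + g (i + 1)) c)
    (htop : ∀ᶠ i in atTop, g i = 0) (hbot : ∀ᶠ i in atBot, g i = 0) :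
    ∃ Φ, SolvesEigen g c Φ ∧ APhi c Φ := by
  obtain ⟨p, hp⟩ := hc.1
  obtain ⟨A, hA⟩ := eventually_atTop.1 htop
  obtain ⟨B, hB⟩ := eventually_atBot.1 hbot
  obtain ⟨Φ, hΦ⟩ := Int.exists_forall_apply_add_one_eq
    fun i ↦ if i ≤ p then c - g i else g (i + 1)
  have hle : ∀ i ≤ p, Φ (i + 1) = Φ i + (c - g i) := fun i hi ↦ by rw [hΦ, if_pos hi]
  have hge : ∀ i ≥ p, Φ (i + 1) = Φ i + g (i + 1) := fun i hi ↦ by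
    rcases hi.eq_or_lt with rfl | hi
    · rw [hle _ le_rfl, ← hp]; ring
    · rw [hΦ, if_neg (by omega)]
  refine ⟨Φ, fun i ↦ ?_, fun M ↦ ⟨?_, ?_⟩⟩
  · have hcle := hc.2 ⟨i, rfl⟩
    have hcle' := hc.2 ⟨i - 1, rfl⟩
    simp only [sub_add_cancel] at hcle'
    rcases le_or_gt i p with hi | hi
    · have hprev := hle (i - 1) (by omega)
      rw [sub_add_cancel] at hprev
      rw [max_eq_left] <;> linarith [hle i hi]
    · have hprev := hge (i - 1) (by omega)
      rw [sub_add_cancel] at hprev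
      rw [max_eq_right] <;> linarith [hge i hi.le]
  · refine ⟨max M (max A p), le_max_left _ _, ?_⟩
    rw [hge _ (by omega), hA _ (by omega), add_zero]
  · refine ⟨max M (max (1 - B) (-p)), le_max_left _ _, ?_⟩
    have hlast := hle (-max M (max (1 - B) (-p)) - 1) (by omega)
    rw [sub_add_cancel, hB _ (by omega)] at hlast
    linarith

theorem exists_solvesEigen_aPhi_iff {g : ℤ → ℝ} {k c : ℝ}
    (hc : IsGreatest (range fun i ↦ g i + g (i + 1)) c)
    (htop : ∀ᶠ i in atTop, g i = 0) (hbot : ∀ᶠ i in atBot, g i = 0) :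
    (∃ Φ, SolvesEigen g k Φ ∧ APhi k Φ) ↔ k = c := by
  constructor
  · rintro ⟨Φ, h, hΦ⟩
    exact le_antisymm (h.le_of_aPhi hΦ hc htop hbot) (h.isGreatest_le hc)
  · rintro rfl
    exact exists_solvesEigen_aPhi hc htop hbot

section Potential

variable {u : ℤ → ℝ} {S : ℝ}

theorem gam_of_add_le_one {i : ℤ} (h : u (i - 1) + u i ≤ 1) : gam u i = u i :=
  min_eq_left (by linarith)

theorem gam_of_one_le_add {i : ℤ} (h : 1 ≤ u (i - 1) + u i) : gam u i = 1 - u (i - 1) :=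
  min_eq_right (by linarith)

theorem del_of_add_le_one {i : ℤ} (h : u (i - 1) + u i ≤ 1) : del u i = u (i - 1) :=
  min_eq_left (by linarith)

theorem del_of_one_le_add {i : ℤ} (h : 1 ≤ u (i - 1) + u i) : del u i = 1 - u i :=
  min_eq_right (by linarith)

theorem gam_eq_zero {i : ℤ} (h : u (i - 1) = 0 ∧ u i = 0) : gam u i = 0 := by
  simp [gam, h.1, h.2]

theorem del_eq_zero {i : ℤ} (h : u (i - 1) = 0 ∧ u i = 0) : del u i = 0 := by
  simp [del, h.1, h.2]

theorem gam_add_gam_le (hS : ∀ i, u (i - 1) + u i ≤ S) (i : ℤ) :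
    gam u i + gam u (i + 1) ≤ min S 1 := by
  have h₁ : gam u i ≤ u i := min_le_left _ _
  have h₂ : gam u (i + 1) ≤ u (i + 1) := min_le_left _ _
  have h₃ : gam u (i + 1) ≤ 1 - u (i + 1 - 1) := min_le_right _ _
  have hS' := hS (i + 1)
  rw [add_sub_cancel_right] at h₃ hS'
  exact le_min (by linarith) (by linarith)

theorem del_add_del_le (hS : ∀ i, u (i - 1) + u i ≤ S) (i : ℤ) :
    del u i + del u (i + 1) ≤ min S 1 := by
  have h₁ : del u i ≤ u (i - 1) := min_le_left _ _
  have h₂ : del u i ≤ 1 - u i := min_le_right _ _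
  have h₃ : del u (i + 1) ≤ u (i + 1 - 1) := min_le_left _ _
  rw [add_sub_cancel_right] at h₃
  exact le_min (by linarith [hS i]) (by linarith)

/-- If `S ≤ 1` the maximum is attained where `u (i - 1) + u i` is; otherwise at the first index
where `u (i - 1) + u i` exceeds `1`. -/
theorem isGreatest_gam_add (hS : IsGreatest (range fun i ↦ u (i - 1) + u i) S)
    (hbot : ∀ᶠ i in atBot, u (i - 1) = 0 ∧ u i = 0) :
    IsGreatest (range fun i ↦ gam u i + gam u (i + 1)) (min S 1) := by
  refine ⟨?_, forall_mem_range.2 (gam_add_gam_le fun i ↦ hS.2 ⟨i, rfl⟩)⟩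
  obtain ⟨i₀, hi₀⟩ := hS.1
  simp only at hi₀
  rcases le_or_gt S 1 with hS1 | hS1
  · have hprev := hS.2 ⟨i₀ - 1, rfl⟩
    refine ⟨i₀ - 1, ?_⟩
    simp only at hprev ⊢
    rw [gam_of_add_le_one (by linarith), sub_add_cancel, gam_of_add_le_one (by linarith),
      min_eq_left hS1, hi₀]
  · obtain ⟨B, hB⟩ := eventually_atBot.1 hbot
    obtain ⟨j, hj, hleast⟩ := Int.exists_least_of_bdd (P := fun j ↦ 1 < u (j - 1) + u j)
      ⟨B + 1, fun z hz ↦ by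
        by_contra! hzB
        obtain ⟨h₁, h₂⟩ := hB z (by omega)
        linarith⟩
      ⟨i₀, hi₀ ▸ hS1⟩
    have hprev : u (j - 1 - 1) + u (j - 1) ≤ 1 :=
      not_lt.1 fun h ↦ (hleast _ h).not_gt (by omega)
    refine ⟨j - 1, ?_⟩
    simp only
    rw [gam_of_add_le_one hprev, sub_add_cancel, gam_of_one_le_add hj.le, min_eq_right hS1.le]
    ring

/-- If `S ≤ 1` the maximum is attained where `u (i - 1) + u i` is; otherwise at the last index
where `u (i - 1) + u i` exceeds `1`. -/
theorem isGreatest_del_add (hS : IsGreatest (range fun i ↦ u (i - 1) + u i) S)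
    (htop : ∀ᶠ i in atTop, u (i - 1) = 0 ∧ u i = 0) :
    IsGreatest (range fun i ↦ del u i + del u (i + 1)) (min S 1) := by
  refine ⟨?_, forall_mem_range.2 (del_add_del_le fun i ↦ hS.2 ⟨i, rfl⟩)⟩
  obtain ⟨i₀, hi₀⟩ := hS.1
  simp only at hi₀
  rcases le_or_gt S 1 with hS1 | hS1
  · have hnext := hS.2 ⟨i₀ + 1, rfl⟩
    refine ⟨i₀, ?_⟩
    simp only [add_sub_cancel_right] at hnext ⊢
    rw [del_of_add_le_one (by linarith), del_of_add_le_one (by simpa using hnext.trans hS1),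
      add_sub_cancel_right, min_eq_left hS1, hi₀]
  · obtain ⟨A, hA⟩ := eventually_atTop.1 htop
    obtain ⟨j, hj, hgreatest⟩ := Int.exists_greatest_of_bdd (P := fun j ↦ 1 < u (j - 1) + u j)
      ⟨A, fun z hz ↦ by
        by_contra! hzA
        obtain ⟨h₁, h₂⟩ := hA z (by omega)
        linarith⟩
      ⟨i₀, hi₀ ▸ hS1⟩
    have hnext : u (j + 1 - 1) + u (j + 1) ≤ 1 :=
      not_lt.1 fun h ↦ (hgreatest _ h).not_gt (by omega)
    refine ⟨j, ?_⟩
    simp only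
    rw [del_of_one_le_add hj.le, del_of_add_le_one hnext, add_sub_cancel_right,
      min_eq_right hS1.le]
    ring

end Potential

theorem stmt_9_general (u : ℤ → ℝ) (k : ℝ)
    (N : ℕ) (hAU : ∀ i : ℤ, ((N : ℤ) ≤ i ∨ i ≤ -(N : ℤ)) → u i = 0)
    (S : ℝ) (hS : ∀ i : ℤ, u (i - 1) + u i ≤ S) (hS' : ∃ i₀ : ℤ, S = u (i₀ - 1) + u i₀) :
    ((∃ Φ : ℤ → ℝ, SolvesG u k Φ ∧ APhi k Φ) ↔ k = min S 1) ∧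
    ((∃ Φ : ℤ → ℝ, SolvesD u k Φ ∧ APhi k Φ) ↔ k = min S 1) := by
  have hmax : IsGreatest (range fun i ↦ u (i - 1) + u i) S :=
    ⟨hS'.imp fun _ h ↦ h.symm, forall_mem_range.2 hS⟩
  have htop : ∀ᶠ i in atTop, u (i - 1) = 0 ∧ u i = 0 :=
    eventually_atTop.2 ⟨N + 1, fun i hi ↦ ⟨hAU _ (.inl (by omega)), hAU _ (.inl (by omega))⟩⟩
  have hbot : ∀ᶠ i in atBot, u (i - 1) = 0 ∧ u i = 0 :=
    eventually_atBot.2 ⟨-N, fun i hi ↦ ⟨hAU _ (.inr (by omega)), hAU _ (.inr (by omega))⟩⟩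
  exact ⟨exists_solvesEigen_aPhi_iff (isGreatest_gam_add hmax hbot)
      (htop.mono fun _ ↦ gam_eq_zero) (hbot.mono fun _ ↦ gam_eq_zero),
    exists_solvesEigen_aPhi_iff (isGreatest_del_add hmax htop)
      (htop.mono fun _ ↦ del_eq_zero) (hbot.mono fun _ ↦ del_eq_zero)⟩

/-- Under (AU), the γ-eigenproblem (resp. the δ-eigenproblem) has a solution
satisfying (AΦ) if and only if `k = min S 1`, where `S` is the greatest value of
`u (i-1) + u i`. -/
theorem stmt_9 (u : ℤ → ℝ) (hu : ∀ i : ℤ, 0 ≤ u i ∧ u i ≤ 1) (k : ℝ)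
    (N : ℕ) (hN : 0 < N) (hAU : ∀ i : ℤ, ((N : ℤ) ≤ i ∨ i ≤ -(N : ℤ)) → u i = 0)
    (S : ℝ) (hS : ∀ i : ℤ, u (i - 1) + u i ≤ S) (hS' : ∃ i₀ : ℤ, S = u (i₀ - 1) + u i₀) :
    ((∃ Φ : ℤ → ℝ, SolvesG u k Φ ∧ APhi k Φ) ↔ k = min S 1) ∧
    ((∃ Φ : ℤ → ℝ, SolvesD u k Φ ∧ APhi k Φ) ↔ k = min S 1) :=
  stmt_9_general u k N hAU S hS hS'
end
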